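/- Let T > 0, α ∈ (0,1), and I ⊆ {1,…,n}. There exist constants C = C(α,m,n,T) > 0 and m₀ = m₀(α,m,n) > 0 such that for every function u ∈ C^{0,2+α}_{WF}([0,T]×S̄_{n,m}) whose support is contained in [0,T]×M̄''_I, every ε ∈ (0,1), and all l, k ∈ {1,…,m}: ‖u_{y_l y_k}‖_{C([0,T]×S̄_{n,m})} ≤ ε ‖u‖_{C^{0,2+α}_{WF}([0,T]×S̄_{n,m})} + C ε^{−m₀} ‖u‖_{C([0,T]×S̄_{n,m})}. -/

import Mathlib

open scoped ENNReal BigOperators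
open Set

noncomputable section

namespace Kimura

/-- Spatial variable space `ℝ^n × ℝ^m`. -/
abbrev Z (n m : ℕ) : Type := (Fin n → ℝ) × (Fin m → ℝ)

/-- Time–space variable space. -/
abbrev E (n m : ℕ) : Type := ℝ × Z n m

variable {n m : ℕ}

/-- The open orthant `S_{n,m} = (0,∞)^n × ℝ^m`. -/
def Sopen (n m : ℕ) : Set (Z n m) := {z | ∀ i, 0 < z.1 i}

/-- The closed orthant `S̄_{n,m} = [0,∞)^n × ℝ^m`. -/
def Sbar (n m : ℕ) : Set (Z n m) := {z | ∀ i, 0 ≤ z.1 i}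

/-- The function `F` used to define the WF distance. -/
def Fwf (s : ℝ) : ℝ := if s ≤ 1 then 2 * Real.sqrt s else s + 1

/-- The spatial WF distance `ρ₀`. -/
def rho0 (z0 z : Z n m) : ℝ :=
  (⨆ i : Fin n, |Fwf (z0.1 i) - Fwf (z.1 i)|) + ⨆ l : Fin m, |z0.2 l - z.2 l|

/-- The parabolic WF distance `ρ`. -/
def rho (P0 P : E n m) : ℝ := rho0 P0.2 P.2 + Real.sqrt |P0.1 - P.1|

/-- The parabolic cylinder `J × D`. -/
def QT (J : Set ℝ) (D : Set (Z n m)) : Set (E n m) := J ×ˢ D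

/-- Supremum norm on `J × D` (valued in `ℝ≥0∞`). -/
def supN (J : Set ℝ) (D : Set (Z n m)) (u : E n m → ℝ) : ℝ≥0∞ :=
  ⨆ P ∈ QT J D, ENNReal.ofReal |u P|

/-- The WF Hölder seminorm of exponent `a` on `J × D`. -/
def holderSemi (a : ℝ) (J : Set ℝ) (D : Set (Z n m)) (u : E n m → ℝ) : ℝ≥0∞ :=
  ⨆ P1 ∈ QT J D, ⨆ P2 ∈ QT J D, ⨆ _ : P1 ≠ P2,
    ENNReal.ofReal (|u P1 - u P2| / rho P1 P2 ^ a)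

/-- The `C^{0,α}_{WF}` norm on `J × D`. -/
def holderN (a : ℝ) (J : Set ℝ) (D : Set (Z n m)) (u : E n m → ℝ) : ℝ≥0∞ :=
  supN J D u + holderSemi a J D u

/-- Time direction. -/
def eT (n m : ℕ) : E n m := (1, 0)

/-- `x_i` direction. -/
def eX (n m : ℕ) (i : Fin n) : E n m := (0, (Pi.single i 1, 0))

/-- `y_l` direction. -/
def eY (n m : ℕ) (l : Fin m) : E n m := (0, (0, Pi.single l 1))

/-- Partial (line) derivative along the direction `v`. -/
def dl (v : E n m) (u : E n m → ℝ) : E n m → ℝ := fun P => lineDeriv ℝ u P v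

/-- Iterated partial derivative `D_t^τ D_x^{ζx} D_y^{ζy}`. -/
def multiD (τ : ℕ) (ζx : Fin n → ℕ) (ζy : Fin m → ℕ) (u : E n m → ℝ) : E n m → ℝ :=
  (dl (eT n m))^[τ]
    (((List.ofFn fun i : Fin n => (dl (eX n m i))^[ζx i]).foldr (· ∘ ·) id)
      (((List.ofFn fun l : Fin m => (dl (eY n m l))^[ζy l]).foldr (· ∘ ·) id) u))

/-- A parabolic multi-index `(τ, ζ)`. -/
abbrev MIdx (n m : ℕ) : Type := ℕ × (Fin n → ℕ) × (Fin m → ℕ)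

/-- Parabolic weight `2τ + |ζ|` of a multi-index. -/
def MIdx.wt (p : MIdx n m) : ℕ := 2 * p.1 + ((∑ i, p.2.1 i) + ∑ l, p.2.2 l)

/-- Iterated derivative associated with a multi-index. -/
def multiDP (p : MIdx n m) (u : E n m → ℝ) : E n m → ℝ := multiD p.1 p.2.1 p.2.2 u

/-- Multi-indices of parabolic weight at most `k`. -/
def Idx (n m k : ℕ) : Type := {p : MIdx n m // MIdx.wt p ≤ k}

/-- The `C^{k,α}_{WF}` norm on `J × D`. -/
def CkN (k : ℕ) (a : ℝ) (J : Set ℝ) (D : Set (Z n m)) (u : E n m → ℝ) : ℝ≥0∞ :=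
  ∑' p : Idx n m k, holderN a J D (multiDP p.1 u)

/-- The region `M_I`. -/
def MI (n m : ℕ) (I : Finset (Fin n)) : Set (Z n m) :=
  {z | (∀ i ∈ I, z.1 i ∈ Set.Ioo (0:ℝ) 1) ∧ ∀ j ∉ I, 1 < z.1 j}

/-- The region `M'_I`. -/
def MI' (n m : ℕ) (I : Finset (Fin n)) : Set (Z n m) :=
  {z | (∀ i ∈ I, z.1 i ∈ Set.Ioo (0:ℝ) 1) ∧ ∀ j ∉ I, 1 / 2 < z.1 j}

/-- The region `M''_I`. -/
def MI'' (n m : ℕ) (I : Finset (Fin n)) : Set (Z n m) :=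
  {z | (∀ i ∈ I, z.1 i ∈ Set.Ioo (0:ℝ) 2) ∧ ∀ j ∉ I, 1 / 4 < z.1 j}

/-- The `C^{0,2+α}_{WF}` norm on a piece `D ⊆ M̄_I`. -/
def pieceN (I : Finset (Fin n)) (a : ℝ) (J : Set ℝ) (D : Set (Z n m)) (u : E n m → ℝ) :
    ℝ≥0∞ :=
  CkN 1 a J D u + holderN a J D (dl (eT n m) u)
  + (∑ i ∈ I, ∑ j ∈ I, holderN a J D
      fun P => Real.sqrt (P.2.1 i * P.2.1 j) * dl (eX n m i) (dl (eX n m j) u) P)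
  + (∑ i ∈ I, ∑ j ∈ Iᶜ, holderN a J D
      fun P => Real.sqrt (P.2.1 i) * dl (eX n m i) (dl (eX n m j) u) P)
  + (∑ i ∈ I, ∑ l : Fin m, holderN a J D
      fun P => Real.sqrt (P.2.1 i) * dl (eX n m i) (dl (eY n m l) u) P)
  + (∑ i ∈ Iᶜ, ∑ j ∈ Iᶜ, holderN a J D (dl (eX n m i) (dl (eX n m j) u)))
  + (∑ i ∈ Iᶜ, ∑ l : Fin m, holderN a J D (dl (eX n m i) (dl (eY n m l) u)))
  + ∑ l : Fin m, ∑ q : Fin m, holderN a J D (dl (eY n m l) (dl (eY n m q) u))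

/-- The `C^{0,2+α}_{WF}` norm on `J × D` for an arbitrary domain `D`. -/
def C2N (a : ℝ) (J : Set ℝ) (D : Set (Z n m)) (u : E n m → ℝ) : ℝ≥0∞ :=
  ∑ I : Finset (Fin n), pieceN I a J (D ∩ closure (MI n m I)) u

/-- The `C^{k,2+α}_{WF}` norm on `J × D`. -/
def Ck2N (k : ℕ) (a : ℝ) (J : Set ℝ) (D : Set (Z n m)) (u : E n m → ℝ) : ℝ≥0∞ :=
  ∑' p : Idx n m k, C2N a J D (multiDP p.1 u)

/-- Time-independent extension of a spatial function. -/
def timeExt (f : Z n m → ℝ) : E n m → ℝ := fun P => f P.2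

/-- The elliptic `C^{k,α}_{WF}` norm on `D`. -/
def eCkN (k : ℕ) (a : ℝ) (D : Set (Z n m)) (f : Z n m → ℝ) : ℝ≥0∞ :=
  CkN k a (Set.Icc 0 0) D (timeExt f)

/-- The elliptic `C^{k,2+α}_{WF}` norm on `D`. -/
def eCk2N (k : ℕ) (a : ℝ) (D : Set (Z n m)) (f : Z n m → ℝ) : ℝ≥0∞ :=
  Ck2N k a (Set.Icc 0 0) D (timeExt f)

/-- Supremum norm of a spatial function on `D`. -/
def supNZ (D : Set (Z n m)) (f : Z n m → ℝ) : ℝ≥0∞ := ⨆ z ∈ D, ENNReal.ofReal |f z|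

/-- Membership in the space `C^{k,α}_{WF}(J × D)`. -/
def MemCk (k : ℕ) (a : ℝ) (J : Set ℝ) (D : Set (Z n m)) (u : E n m → ℝ) : Prop :=
  CkN k a J D u ≠ ⊤ ∧ ∀ p : Idx n m k, ContinuousOn (multiDP p.1 u) (QT J D)

/-- Membership in the space `C^{k,2+α}_{WF}(J × D)`. -/
def MemCk2 (k : ℕ) (a : ℝ) (J : Set ℝ) (D : Set (Z n m)) (u : E n m → ℝ) : Prop :=
  Ck2N k a J D u ≠ ⊤
  ∧ (∀ p : Idx n m (k + 1), ContinuousOn (multiDP p.1 u) (QT J D))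
  ∧ (∀ p : Idx n m k, ContinuousOn (dl (eT n m) (multiDP p.1 u)) (QT J D))
  ∧ (∀ p : Idx n m (k + 2), ContinuousOn (multiDP p.1 u) (QT J (D ∩ Sopen n m)))

/-- Membership in the elliptic space `C^{k,α}_{WF}(D)`. -/
def MemECk (k : ℕ) (a : ℝ) (D : Set (Z n m)) (f : Z n m → ℝ) : Prop :=
  MemCk k a (Set.Icc 0 0) D (timeExt f)

/-- Membership in the elliptic space `C^{k,2+α}_{WF}(D)`. -/
def MemECk2 (k : ℕ) (a : ℝ) (D : Set (Z n m)) (f : Z n m → ℝ) : Prop :=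
  MemCk2 k a (Set.Icc 0 0) D (timeExt f)

/-- Coefficients of a generalized Kimura operator. -/
structure Coeffs (n m : ℕ) where
  a : Fin n → Z n m → ℝ
  tA : Fin n → Fin n → Z n m → ℝ
  b : Fin n → Z n m → ℝ
  c : Fin n → Fin m → Z n m → ℝ
  d : Fin m → Fin m → Z n m → ℝ
  e : Fin m → Z n m → ℝ

/-- The generalized Kimura operator `L`. -/
def Lop (co : Coeffs n m) (u : E n m → ℝ) : E n m → ℝ := fun P =>
  (∑ i, (P.2.1 i * co.a i P.2 * dl (eX n m i) (dl (eX n m i) u) P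
        + co.b i P.2 * dl (eX n m i) u P))
  + (∑ i, ∑ j, P.2.1 i * P.2.1 j * co.tA i j P.2 * dl (eX n m i) (dl (eX n m j) u) P)
  + (∑ i, ∑ l, P.2.1 i * co.c i l P.2 * dl (eX n m i) (dl (eY n m l) u) P)
  + (∑ q, ∑ l, co.d q l P.2 * dl (eY n m q) (dl (eY n m l) u) P)
  + ∑ l, co.e l P.2 * dl (eY n m l) u P

/-- Strict ellipticity (condition (1) of the Assumption). -/
def Ellipt (δ : ℝ) (co : Coeffs n m) : Prop :=
  ∀ I : Finset (Fin n), ∀ z ∈ closure (MI n m I), ∀ ξ : Fin n → ℝ, ∀ η : Fin m → ℝ,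
    δ * ((∑ i, ξ i ^ 2) + ∑ l, η l ^ 2) ≤
      (∑ i ∈ I, co.a i z * ξ i ^ 2) + (∑ i ∈ Iᶜ, z.1 i * co.a i z * ξ i ^ 2)
      + (∑ i ∈ I, ∑ j ∈ I, co.tA i j z * ξ i * ξ j)
      + (∑ i ∈ I, ∑ j ∈ Iᶜ, z.1 j * (co.tA i j z + co.tA j i z) * ξ i * ξ j)
      + (∑ i ∈ Iᶜ, ∑ j ∈ Iᶜ, z.1 i * z.1 j * co.tA i j z * ξ i * ξ j)
      + (∑ i ∈ I, ∑ l, co.c i l z * ξ i * η l)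
      + (∑ i ∈ Iᶜ, ∑ l, z.1 i * co.c i l z * ξ i * η l)
      + ∑ q, ∑ l, co.d q l z * η q * η l

/-- Hölder continuity of the coefficients (condition (2) of the Assumption). -/
def HolderBd (k : ℕ) (a K : ℝ) (co : Coeffs n m) : Prop :=
  ∀ I : Finset (Fin n),
    (∑ i ∈ I, eCkN k a (closure (MI n m I)) (co.a i))
    + (∑ i ∈ Iᶜ, eCkN k a (closure (MI n m I)) fun z => z.1 i * co.a i z)
    + (∑ i ∈ I, ∑ j ∈ I, eCkN k a (closure (MI n m I)) (co.tA i j))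
    + (∑ i ∈ I, ∑ j ∈ Iᶜ,
        (eCkN k a (closure (MI n m I)) (fun z => z.1 j * co.tA i j z)
         + eCkN k a (closure (MI n m I)) fun z => z.1 j * co.tA j i z))
    + (∑ i ∈ Iᶜ, ∑ j ∈ Iᶜ, eCkN k a (closure (MI n m I)) fun z => z.1 i * z.1 j * co.tA i j z)
    + (∑ i ∈ I, ∑ l, eCkN k a (closure (MI n m I)) (co.c i l))
    + (∑ i ∈ Iᶜ, ∑ l, eCkN k a (closure (MI n m I)) fun z => z.1 i * co.c i l z)
    + (∑ q, ∑ l, eCkN k a (closure (MI n m I)) (co.d q l))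
    + (∑ i, eCkN k a (closure (MI n m I)) (co.b i))
    + (∑ l, eCkN k a (closure (MI n m I)) (co.e l))
    ≤ ENNReal.ofReal K

/-- Nonnegativity of the drift (condition (3) of the Assumption). -/
def NonnegDrift (co : Coeffs n m) : Prop :=
  ∀ i, ∀ z ∈ Sbar n m, z.1 i = 0 → 0 ≤ co.b i z

/-- The full coefficient Assumption of order `k`, exponent `a`, constants `δ`, `K`. -/
def Assump (k : ℕ) (a δ K : ℝ) (co : Coeffs n m) : Prop :=
  Ellipt δ co ∧ HolderBd k a K co ∧ NonnegDrift co

/-- The Euclidean ball of radius `r` about `z0`, relative to `S_{n,m}`. -/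
def ball (z0 : Z n m) (r : ℝ) : Set (Z n m) :=
  {z ∈ Sopen n m |
    Real.sqrt ((∑ i, (z.1 i - z0.1 i) ^ 2) + ∑ l, (z.2 l - z0.2 l) ^ 2) < r}

/-- A function all of whose iterated derivatives are continuous and bounded on `J × D`. -/
def SmoothBdd (J : Set ℝ) (D : Set (Z n m)) (g : E n m → ℝ) : Prop :=
  ∀ p : MIdx n m,
    ContinuousOn (multiDP p g) (QT J D) ∧ ∃ M : ℝ, ∀ P ∈ QT J D, |multiDP p g P| ≤ M

/-- Bounded continuous function on a set. -/
def BCOn {X : Type*} [TopologicalSpace X] (g : X → ℝ) (D : Set X) : Prop :=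
  ContinuousOn g D ∧ ∃ M : ℝ, ∀ x ∈ D, |g x| ≤ M

end Kimura

/-!
Every point of `S̄_{n,m}` lies in the closure of some `M_I` (take `I = {i | xᵢ ≤ 1}`), and lines in a
`y`-direction stay inside that piece, where the `C^{0,2+α}_{WF}` norm `K` of `u` bounds the
`α`-Hölder seminorms of `u_{y_q}` and `u_{y_l y_q}` along `y` (the WF distance restricted to
such a line is the Euclidean one). The one-dimensional interpolation
`|g'(0)| ≤ osc_{[0,h]} g' + 2 sup_{[0,h]} |g| / h`, a consequence of the mean value theorem, is
applied first to `u_{y_q}` at scale `h'` and then to `u_{y_l y_q}` at scale `h`: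
`|u_{y_l y_q}| ≤ K h^α + 2 (K h'^α + 2 ‖u‖_∞ / h') / h`.
Choosing `h^α = ε/8` and `h'^α = ε h / 8` gives the bound with `m₀ = α⁻¹ (2 + α⁻¹)`.
-/

section FoldrComp

variable {X : Type*}

theorem List.foldr_comp_eq_id {L : List (X → X)} (h : ∀ f ∈ L, f = id) :
    L.foldr (· ∘ ·) id = id := by
  induction L with
  | nil => rfl
  | cons f L ih =>
    rw [List.foldr_cons, h f List.mem_cons_self, ih fun g hg => h g (List.mem_cons_of_mem _ hg)]
    rfl

theorem List.foldr_comp_ofFn_eq_of_eq_id {k : ℕ} (f : Fin k → X → X) (q : Fin k)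
    (hf : ∀ j ≠ q, f j = id) : (List.ofFn f).foldr (· ∘ ·) id = f q := by
  induction k with
  | zero => exact q.elim0
  | succ k ih =>
    rw [List.ofFn_succ, List.foldr_cons]
    cases q using Fin.cases with
    | zero =>
      rw [List.foldr_comp_eq_id, Function.comp_id]
      simp only [List.mem_ofFn, forall_exists_index]
      rintro _ j rfl
      exact hf _ (Fin.succ_ne_zero j)
    | succ q =>
      rw [hf 0 (Fin.succ_ne_zero q).symm, Function.id_comp]
      exact ih _ q fun j hj => hf _ (Fin.succ_injective _ |>.ne hj)

end FoldrComp

theorem abs_deriv_zero_le_of_osc {g : ℝ → ℝ} {h K M : ℝ} (hh : 0 < h)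
    (hosc : ∀ s ∈ Icc 0 h, |deriv g s - deriv g 0| ≤ K)
    (hbound : ∀ s ∈ Icc 0 h, |g s| ≤ M) :
    |deriv g 0| ≤ K + 2 * M / h := by
  have hM : 0 ≤ M := (abs_nonneg _).trans (hbound 0 ⟨le_rfl, hh.le⟩)
  by_cases hdiff : ∀ s ∈ Icc 0 h, DifferentiableAt ℝ g s
  · obtain ⟨c, hc, hslope⟩ := exists_deriv_eq_slope g hh
      (fun s hs => (hdiff s hs).continuousAt.continuousWithinAt)
      (fun s hs => (hdiff s (Ioo_subset_Icc_self hs)).differentiableWithinAt)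
    have hgc : |deriv g c| ≤ 2 * M / h := by
      rw [hslope, sub_zero, abs_div, abs_of_pos hh]
      gcongr
      calc |g h - g 0| ≤ |g h| + |g 0| := abs_sub _ _
        _ ≤ 2 * M := by linarith [hbound h ⟨hh.le, le_rfl⟩, hbound 0 ⟨le_rfl, hh.le⟩]
    have hoscc := hosc c (Ioo_subset_Icc_self hc)
    rw [abs_sub_comm] at hoscc
    linarith [abs_sub_abs_le_abs_sub (deriv g 0) (deriv g c)]
  · -- `deriv` takes the junk value `0` where `g` is not differentiable
    push Not at hdiff
    obtain ⟨s, hs, hnd⟩ := hdiff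
    have hK := hosc s hs
    rw [deriv_zero_of_not_differentiableAt hnd, zero_sub, abs_neg] at hK
    have : 0 ≤ 2 * M / h := by positivity
    linarith

section LineDeriv

variable {F : Type*} [AddCommGroup F] [Module ℝ F]

theorem deriv_comp_add_smul_eq_lineDeriv (w : F → ℝ) (P v : F) (s : ℝ) :
    deriv (fun t => w (P + t • v)) s = lineDeriv ℝ w (P + s • v) v := by
  simpa [lineDeriv, add_smul, add_assoc, add_comm] using
    (deriv_comp_const_add (fun t => w (P + t • v)) s 0).symm

theorem abs_lineDeriv_le_of_osc {w : F → ℝ} {P v : F} {h K M : ℝ} (hh : 0 < h)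
    (hosc : ∀ s ∈ Icc 0 h, |lineDeriv ℝ w (P + s • v) v - lineDeriv ℝ w P v| ≤ K)
    (hbound : ∀ s ∈ Icc 0 h, |w (P + s • v)| ≤ M) :
    |lineDeriv ℝ w P v| ≤ K + 2 * M / h := by
  have hP : lineDeriv ℝ w P v = deriv (fun t => w (P + t • v)) (0 : ℝ) := by
    rw [deriv_comp_add_smul_eq_lineDeriv, zero_smul, add_zero]
  rw [hP]
  exact abs_deriv_zero_le_of_osc hh
    (fun s hs => by simpa [deriv_comp_add_smul_eq_lineDeriv] using hosc s hs) hbound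

end LineDeriv

namespace Kimura

variable {n m : ℕ}

theorem multiD_zero (u : E n m → ℝ) : multiD 0 0 0 u = u := by
  simp [multiD, List.foldr_comp_eq_id]

theorem multiD_single_y (q : Fin m) (u : E n m → ℝ) :
    multiD 0 0 (Pi.single q 1) u = dl (eY n m q) u := by
  rw [multiD, List.foldr_comp_ofFn_eq_of_eq_id _ q fun j hj => by simp [hj]]
  simp [List.foldr_comp_eq_id]

theorem closure_MI (I : Finset (Fin n)) :
    closure (MI n m I) = {z | (∀ i ∈ I, z.1 i ∈ Icc (0:ℝ) 1) ∧ ∀ j ∉ I, 1 ≤ z.1 j} := by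
  have hMI : MI n m I = Prod.fst ⁻¹' Set.pi univ
      (fun i => if i ∈ I then Ioo (0:ℝ) 1 else Ioi 1) := by
    ext z
    simp only [MI, mem_ofPred_eq, mem_preimage, mem_pi, mem_univ, true_implies]
    constructor
    · rintro ⟨h1, h2⟩ i
      split_ifs with hi
      exacts [h1 i hi, h2 i hi]
    · intro h
      exact ⟨fun i hi => by simpa [hi] using h i, fun j hj => by simpa [hj] using h j⟩
  rw [hMI, ← isOpenMap_fst.preimage_closure_eq_closure_preimage continuous_fst, closure_pi_set]
  ext z
  simp only [mem_preimage, mem_pi, mem_univ, true_implies, mem_ofPred_eq]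
  constructor
  · intro h
    refine ⟨fun i hi => ?_, fun j hj => ?_⟩
    · simpa [hi, closure_Ioo zero_ne_one] using h i
    · simpa [hj] using h j
  · rintro ⟨h1, h2⟩ i
    split_ifs with hi
    · simpa [closure_Ioo zero_ne_one] using h1 i hi
    · simpa using h2 i hi

theorem mem_closure_MI_filter_le_one {z : Z n m} (hz : z ∈ Sbar n m) :
    z ∈ closure (MI n m (Finset.univ.filter fun i => z.1 i ≤ 1)) := by
  rw [closure_MI]
  refine ⟨fun i hi => ⟨hz i, (Finset.mem_filter.mp hi).2⟩, fun j hj => ?_⟩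
  simp only [Finset.mem_filter, Finset.mem_univ, true_and, not_le] at hj
  exact hj.le

theorem add_smul_eY_mem_QT_piece {J : Set ℝ} {I : Finset (Fin n)} {Q : E n m}
    (hQ : Q ∈ QT J (Sbar n m ∩ closure (MI n m I))) (l : Fin m) (s : ℝ) :
    Q + s • eY n m l ∈ QT J (Sbar n m ∩ closure (MI n m I)) := by
  simpa [QT, Sbar, closure_MI, eY] using hQ

theorem rho_self (P : E n m) : rho P P = 0 := by
  simp [rho, rho0]

theorem rho_add_smul_eY (Q : E n m) (l : Fin m) {s : ℝ} (hs : 0 ≤ s) :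
    rho (Q + s • eY n m l) Q = s := by
  have hy : ∀ l', |(Q + s • eY n m l).2.2 l' - Q.2.2 l'| = (Pi.single l s : Fin m → ℝ) l' := by
    intro l'
    rcases eq_or_ne l' l with rfl | hl <;> simp [eY, abs_of_nonneg hs, *]
  have : Nonempty (Fin m) := ⟨l⟩
  simp only [rho, rho0, hy]
  simp only [eY, Prod.fst_add, Prod.smul_fst, smul_zero, add_zero, Prod.snd_add, Prod.smul_snd,
    sub_self, abs_zero, Real.iSup_const_zero, zero_add, Real.sqrt_zero]
  refine le_antisymm (ciSup_le fun l' => ?_) ?_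
  · rcases eq_or_ne l' l with rfl | hl <;> simp [*]
  · exact le_ciSup_of_le (Set.finite_range _).bddAbove l (by simp)

theorem abs_le_toReal_supN {J : Set ℝ} {D : Set (Z n m)} {w : E n m → ℝ}
    (hw : supN J D w ≠ ⊤) {P : E n m} (hP : P ∈ QT J D) : |w P| ≤ (supN J D w).toReal :=
  (ENNReal.ofReal_le_iff_le_toReal hw).mp (le_iSup₂_of_le P hP le_rfl)

theorem abs_sub_le_holderN_mul_rho_rpow {a : ℝ} {J : Set ℝ} {D : Set (Z n m)} {w : E n m → ℝ}
    (hw : holderN a J D w ≠ ⊤) {P₁ P₂ : E n m} (h₁ : P₁ ∈ QT J D) (h₂ : P₂ ∈ QT J D)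
    (hρ : 0 < rho P₁ P₂) :
    |w P₁ - w P₂| ≤ (holderN a J D w).toReal * rho P₁ P₂ ^ a := by
  have hne : P₁ ≠ P₂ := by rintro rfl; simp [rho_self] at hρ
  have hquot : ENNReal.ofReal (|w P₁ - w P₂| / rho P₁ P₂ ^ a) ≤ holderN a J D w :=
    (le_iSup₂_of_le P₁ h₁ <| le_iSup₂_of_le P₂ h₂ <|
      le_iSup_of_le (f := fun _ : P₁ ≠ P₂ => _) hne le_rfl).trans le_add_self
  rwa [ENNReal.ofReal_le_iff_le_toReal hw, div_le_iff₀ (Real.rpow_pos_of_pos hρ a)] at hquot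

theorem holderN_multiDP_le_CkN (k : ℕ) (a : ℝ) (J : Set ℝ) (D : Set (Z n m)) (u : E n m → ℝ)
    (p : Idx n m k) : holderN a J D (multiDP p.1 u) ≤ CkN k a J D u :=
  ENNReal.le_tsum (f := fun p : Idx n m k => holderN a J D (multiDP p.1 u)) p

theorem holderN_le_CkN_one (a : ℝ) (J : Set ℝ) (D : Set (Z n m)) (u : E n m → ℝ) :
    holderN a J D u ≤ CkN 1 a J D u := by
  simpa [multiDP, multiD_zero] using
    holderN_multiDP_le_CkN 1 a J D u ⟨(0, 0, 0), by simp [MIdx.wt]⟩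

theorem holderN_dl_eY_le_CkN_one (a : ℝ) (J : Set ℝ) (D : Set (Z n m)) (u : E n m → ℝ)
    (q : Fin m) : holderN a J D (dl (eY n m q) u) ≤ CkN 1 a J D u := by
  simpa [multiDP, multiD_single_y] using
    holderN_multiDP_le_CkN 1 a J D u ⟨(0, 0, Pi.single q 1), by simp [MIdx.wt]⟩

theorem CkN_one_le_pieceN (I : Finset (Fin n)) (a : ℝ) (J : Set ℝ) (D : Set (Z n m))
    (u : E n m → ℝ) : CkN 1 a J D u ≤ pieceN I a J D u := by
  unfold pieceN
  iterate 6 refine le_add_right ?_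
  exact le_self_add

theorem holderN_dl_eY_dl_eY_le_pieceN (I : Finset (Fin n)) (a : ℝ) (J : Set ℝ)
    (D : Set (Z n m)) (u : E n m → ℝ) (l q : Fin m) :
    holderN a J D (dl (eY n m l) (dl (eY n m q) u)) ≤ pieceN I a J D u :=
  calc holderN a J D (dl (eY n m l) (dl (eY n m q) u))
      ≤ ∑ l' : Fin m, ∑ q' : Fin m, holderN a J D (dl (eY n m l') (dl (eY n m q') u)) :=
        (Finset.single_le_sum (f := fun q' => holderN a J D (dl (eY n m l) (dl (eY n m q') u)))
          (fun _ _ => zero_le) (Finset.mem_univ q)).trans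
        (Finset.single_le_sum (f := fun l' => ∑ q' : Fin m,
          holderN a J D (dl (eY n m l') (dl (eY n m q') u))) (fun _ _ => zero_le)
          (Finset.mem_univ l))
    _ ≤ pieceN I a J D u := le_add_self

theorem pieceN_le_Ck2N (a : ℝ) (J : Set ℝ) (I : Finset (Fin n)) (u : E n m → ℝ) :
    pieceN I a J (Sbar n m ∩ closure (MI n m I)) u ≤ Ck2N 0 a J (Sbar n m) u :=
  calc pieceN I a J (Sbar n m ∩ closure (MI n m I)) u ≤ C2N a J (Sbar n m) u :=
        Finset.single_le_sum (f := fun I' => pieceN I' a J (Sbar n m ∩ closure (MI n m I')) u)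
          (fun _ _ => zero_le) (Finset.mem_univ I)
    _ ≤ Ck2N 0 a J (Sbar n m) u := by
        simpa [Ck2N, multiDP, multiD_zero] using
          ENNReal.le_tsum (f := fun p : Idx n m 0 => C2N a J (Sbar n m) (multiDP p.1 u))
            ⟨(0, 0, 0), by simp [MIdx.wt]⟩

theorem supN_Sbar_le_Ck2N (a : ℝ) (J : Set ℝ) (u : E n m → ℝ) :
    supN J (Sbar n m) u ≤ Ck2N 0 a J (Sbar n m) u := by
  refine iSup₂_le fun P hP => ?_
  set I := Finset.univ.filter fun i => P.2.1 i ≤ 1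
  have hPI : P ∈ QT J (Sbar n m ∩ closure (MI n m I)) :=
    ⟨hP.1, hP.2, mem_closure_MI_filter_le_one hP.2⟩
  calc ENNReal.ofReal |u P| ≤ supN J (Sbar n m ∩ closure (MI n m I)) u :=
        le_iSup₂_of_le P hPI le_rfl
    _ ≤ holderN a J (Sbar n m ∩ closure (MI n m I)) u := le_self_add
    _ ≤ Ck2N 0 a J (Sbar n m) u :=
        ((holderN_le_CkN_one ..).trans (CkN_one_le_pieceN I ..)).trans (pieceN_le_Ck2N ..)

theorem abs_dl_eY_le {a : ℝ} (ha : 0 < a) {J : Set ℝ} {D : Set (Z n m)} {w : E n m → ℝ}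
    {l : Fin m} (hw : holderN a J D (dl (eY n m l) w) ≠ ⊤) {P : E n m} {h M : ℝ} (hh : 0 < h)
    (hseg : ∀ s ∈ Icc 0 h, P + s • eY n m l ∈ QT J D)
    (hbound : ∀ s ∈ Icc 0 h, |w (P + s • eY n m l)| ≤ M) :
    |dl (eY n m l) w P| ≤ (holderN a J D (dl (eY n m l) w)).toReal * h ^ a + 2 * M / h := by
  refine abs_lineDeriv_le_of_osc hh (fun s hs => ?_) hbound
  rcases hs.1.eq_or_lt with rfl | hs₀
  · simp only [zero_smul, add_zero, sub_self, abs_zero]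
    positivity
  have hρ := rho_add_smul_eY P l hs.1
  calc |dl (eY n m l) w (P + s • eY n m l) - dl (eY n m l) w P|
      ≤ (holderN a J D (dl (eY n m l) w)).toReal * s ^ a := by
        have := abs_sub_le_holderN_mul_rho_rpow hw (hseg s hs)
          (by simpa using hseg 0 ⟨le_rfl, hh.le⟩) (hρ.symm ▸ hs₀)
        rwa [hρ] at this
    _ ≤ (holderN a J D (dl (eY n m l) w)).toReal * h ^ a := by
        gcongr
        exact hs.2

theorem abs_dl_eY_dl_eY_le {a : ℝ} (ha : 0 < a) {J : Set ℝ} {u : E n m → ℝ}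
    (hu : Ck2N 0 a J (Sbar n m) u ≠ ⊤) {P : E n m} (hP : P ∈ QT J (Sbar n m)) (l q : Fin m)
    {h h' : ℝ} (hh : 0 < h) (hh' : 0 < h') :
    |dl (eY n m l) (dl (eY n m q) u) P|
      ≤ (Ck2N 0 a J (Sbar n m) u).toReal * h ^ a
        + 2 * ((Ck2N 0 a J (Sbar n m) u).toReal * h' ^ a
          + 2 * (supN J (Sbar n m) u).toReal / h') / h := by
  set I := Finset.univ.filter fun i => P.2.1 i ≤ 1
  set D := Sbar n m ∩ closure (MI n m I)
  have hPD : P ∈ QT J D := ⟨hP.1, hP.2, mem_closure_MI_filter_le_one hP.2⟩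
  have hcompare : ∀ {N : ℝ≥0∞}, N ≤ Ck2N 0 a J (Sbar n m) u →
      N ≠ ⊤ ∧ N.toReal ≤ (Ck2N 0 a J (Sbar n m) u).toReal :=
    fun hN => ⟨ne_top_of_le_ne_top hu hN, ENNReal.toReal_mono hu hN⟩
  have hpiece := pieceN_le_Ck2N a J I u
  obtain ⟨hwq, hwq_le⟩ := hcompare
    ((holderN_dl_eY_le_CkN_one a J D u q).trans ((CkN_one_le_pieceN I ..).trans hpiece))
  obtain ⟨hwlq, hwlq_le⟩ := hcompare ((holderN_dl_eY_dl_eY_le_pieceN I a J D u l q).trans hpiece)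
  have hsup := (hcompare (supN_Sbar_le_Ck2N a J u)).1
  have hinner : ∀ s ∈ Icc 0 h, |dl (eY n m q) u (P + s • eY n m l)|
      ≤ (Ck2N 0 a J (Sbar n m) u).toReal * h' ^ a + 2 * (supN J (Sbar n m) u).toReal / h' := by
    intro s _
    have hQD := add_smul_eY_mem_QT_piece hPD l s
    refine (abs_dl_eY_le ha hwq hh' (fun s' _ => add_smul_eY_mem_QT_piece hQD q s')
      (fun s' _ => abs_le_toReal_supN hsup ⟨(add_smul_eY_mem_QT_piece hQD q s').1,
        (add_smul_eY_mem_QT_piece hQD q s').2.1⟩)).trans ?_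
    gcongr
  exact (abs_dl_eY_le ha hwlq hh (fun s _ => add_smul_eY_mem_QT_piece hPD l s) hinner).trans
    (by gcongr)

theorem abs_dl_eY_dl_eY_le_eps {a : ℝ} (ha : 0 < a) {J : Set ℝ} {u : E n m → ℝ}
    (hu : Ck2N 0 a J (Sbar n m) u ≠ ⊤) {P : E n m} (hP : P ∈ QT J (Sbar n m)) (l q : Fin m)
    {ε : ℝ} (hε : 0 < ε) :
    |dl (eY n m l) (dl (eY n m q) u) P|
      ≤ ε * (Ck2N 0 a J (Sbar n m) u).toReal
        + 4 * 8 ^ (a⁻¹ * (2 + a⁻¹)) * ε ^ (-(a⁻¹ * (2 + a⁻¹))) * (supN J (Sbar n m) u).toReal := by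
  set K := (Ck2N 0 a J (Sbar n m) u).toReal
  set S := (supN J (Sbar n m) u).toReal
  set δ := ε / 8
  have hδ : 0 < δ := by positivity
  set h := δ ^ a⁻¹
  set h' := (δ * h) ^ a⁻¹
  have hh : 0 < h := by positivity
  have hh' : 0 < h' := by positivity
  have hha : h ^ a = δ := Real.rpow_inv_rpow hδ.le ha.ne'
  have hh'a : h' ^ a = δ * h := Real.rpow_inv_rpow (by positivity) ha.ne'
  have hhh' : h * h' = δ ^ (a⁻¹ * (2 + a⁻¹)) := by
    simp only [h', h]
    rw [Real.mul_rpow hδ.le (by positivity), ← Real.rpow_mul hδ.le, ← mul_assoc,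
      ← Real.rpow_add hδ, ← Real.rpow_add hδ]
    ring_nf
  have hC : 4 * 8 ^ (a⁻¹ * (2 + a⁻¹)) * ε ^ (-(a⁻¹ * (2 + a⁻¹))) = 4 / (h * h') := by
    rw [hhh', Real.div_rpow hε.le (by norm_num), Real.rpow_neg hε.le]
    field_simp
  have hK : 0 ≤ K := ENNReal.toReal_nonneg
  calc |dl (eY n m l) (dl (eY n m q) u) P| ≤ K * h ^ a + 2 * (K * h' ^ a + 2 * S / h') / h :=
        abs_dl_eY_dl_eY_le ha hu hP l q hh hh'
    _ = 3 / 8 * ε * K + 4 / (h * h') * S := by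
        rw [hha, hh'a]
        field_simp
        ring
    _ ≤ ε * K + 4 * 8 ^ (a⁻¹ * (2 + a⁻¹)) * ε ^ (-(a⁻¹ * (2 + a⁻¹))) * S := by
        rw [hC]
        linarith [mul_nonneg hε.le hK]

theorem statement10_general (n m : ℕ) (T : ℝ)
    (a : ℝ) (ha : a ∈ Set.Ioo (0:ℝ) 1) (I : Finset (Fin n)) :
    ∃ C > (0:ℝ), ∃ m₀ > (0:ℝ), ∀ u : E n m → ℝ,
      MemCk2 0 a (Set.Icc 0 T) (Sbar n m) u →
      Function.support u ⊆ QT (Set.Icc 0 T) (closure (MI'' n m I)) →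
      ∀ ε ∈ Set.Ioo (0:ℝ) 1, ∀ l q : Fin m,
        supN (Set.Icc 0 T) (Sbar n m) (dl (eY n m l) (dl (eY n m q) u)) ≤
          ENNReal.ofReal ε * Ck2N 0 a (Set.Icc 0 T) (Sbar n m) u
            + ENNReal.ofReal (C * ε ^ (-m₀)) * supN (Set.Icc 0 T) (Sbar n m) u := by
  have ha₀ := ha.1
  refine ⟨4 * 8 ^ (a⁻¹ * (2 + a⁻¹)), by positivity, a⁻¹ * (2 + a⁻¹), by positivity,
    fun u hu _ ε hε l q => iSup₂_le fun P hP => ?_⟩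
  have hε₀ := hε.1
  have hsup := ne_top_of_le_ne_top hu.1 (supN_Sbar_le_Ck2N a _ u)
  calc ENNReal.ofReal |dl (eY n m l) (dl (eY n m q) u) P|
      ≤ ENNReal.ofReal (ε * (Ck2N 0 a (Icc 0 T) (Sbar n m) u).toReal
          + 4 * 8 ^ (a⁻¹ * (2 + a⁻¹)) * ε ^ (-(a⁻¹ * (2 + a⁻¹)))
            * (supN (Icc 0 T) (Sbar n m) u).toReal) :=
        ENNReal.ofReal_le_ofReal (abs_dl_eY_dl_eY_le_eps ha₀ hu.1 hP l q hε₀)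
    _ = _ := by
        rw [ENNReal.ofReal_add (by positivity) (by positivity), ENNReal.ofReal_mul hε₀.le,
          ENNReal.ofReal_mul (by positivity), ENNReal.ofReal_toReal hu.1,
          ENNReal.ofReal_toReal hsup]

/-- Interpolation inequality (2.12): sup norm of `u_{y_l y_k}`,
for `u` supported in `[0,T] × M̄''_I`. -/
theorem statement10 (n m : ℕ) (hnm : 1 ≤ n + m) (T : ℝ) (hT : 0 < T)
    (a : ℝ) (ha : a ∈ Set.Ioo (0:ℝ) 1) (I : Finset (Fin n)) :
    ∃ C > (0:ℝ), ∃ m₀ > (0:ℝ), ∀ u : E n m → ℝ,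
      MemCk2 0 a (Set.Icc 0 T) (Sbar n m) u →
      Function.support u ⊆ QT (Set.Icc 0 T) (closure (MI'' n m I)) →
      ∀ ε ∈ Set.Ioo (0:ℝ) 1, ∀ l q : Fin m,
        supN (Set.Icc 0 T) (Sbar n m) (dl (eY n m l) (dl (eY n m q) u)) ≤
          ENNReal.ofReal ε * Ck2N 0 a (Set.Icc 0 T) (Sbar n m) u
            + ENNReal.ofReal (C * ε ^ (-m₀)) * supN (Set.Icc 0 T) (Sbar n m) u :=
  statement10_general n m T a ha I

end Kimura
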